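/- Let H be a complex Hilbert space, let {P_a}_{a=1}^c and {Q_b}_{b=1}^c be PVMs with c outputs in M_n(B(H)) (each P_a = (P_{a,ij}) and Q_b = (Q_{b,kl}) a self-adjoint idempotent on H^n, with Σ_a P_a and Σ_b Q_b equal to the identity of H^n), whose entries commute (P_{a,ij} Q_{b,kl} = Q_{b,kl} P_{a,ij} for all indices), and let ψ ∈ H be a unit vector. Suppose the associated correlation is synchronous, i.e. Σ_{i,j=1}^n ⟨P_{a,ij} Q_{b,ij} ψ, ψ⟩ = 0 for all a ≠ b. Then Q_{a,ij} ψ = (P_{a,ij})* ψ for all 1 ≤ a ≤ c and 1 ≤ i, j ≤ n. -/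

import Mathlib

open scoped ENNReal

set_option synthInstance.maxHeartbeats 1000000
set_option maxHeartbeats 1000000

noncomputable section

instance piLpCompleteSpace {ι : Type*} (p : ℝ≥0∞) (β : ι → Type*)
    [∀ i, UniformSpace (β i)] [∀ i, CompleteSpace (β i)] : CompleteSpace (PiLp p β) :=
  (PiLp.uniformEquiv p β).completeSpace_iff.2 (Pi.complete β)

/-- The isometric embedding of `E` onto the `i`-th coordinate of the
ℓ²-direct sum of `n` copies of `E`. -/
def inclPi (E : Type*) [NormedAddCommGroup E] [InnerProductSpace ℂ E]
    (n : ℕ) (i : Fin n) : E →L[ℂ] PiLp 2 (fun _ : Fin n => E) :=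
  (PiLp.continuousLinearEquiv 2 ℂ (fun _ : Fin n => E)).symm.toContinuousLinearMap.comp
    (ContinuousLinearMap.pi fun j => if j = i then ContinuousLinearMap.id ℂ E else 0)

/-- The continuous linear projection onto the `i`-th coordinate of the
ℓ²-direct sum of `n` copies of `E`. -/
def projPi (E : Type*) [NormedAddCommGroup E] [InnerProductSpace ℂ E]
    (n : ℕ) (i : Fin n) : PiLp 2 (fun _ : Fin n => E) →L[ℂ] E :=
  (ContinuousLinearMap.proj i).comp
    (PiLp.continuousLinearEquiv 2 ℂ (fun _ : Fin n => E)).toContinuousLinearMap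

/-- The operator on the ℓ²-direct sum `E^n` associated to an `n × n` matrix of bounded
operators on `E`, acting by `(T ξ) i = ∑ j, T i j (ξ j)`. -/
def matToOp {E : Type*} [NormedAddCommGroup E] [InnerProductSpace ℂ E] {n : ℕ}
    (T : Matrix (Fin n) (Fin n) (E →L[ℂ] E)) :
    PiLp 2 (fun _ : Fin n => E) →L[ℂ] PiLp 2 (fun _ : Fin n => E) :=
  ∑ i, ∑ j, (inclPi E n i).comp ((T i j).comp (projPi E n j))

/-!
Write `v_{a,ij} = Q_{a,ij} ψ - (P_{a,ij})* ψ`. Since each `P_a` is an orthogonal projection and the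
`P_a` sum to `1`, the entries satisfy `(P_{a,ij})* = P_{a,ji}`, `∑_k P_{a,ik} P_{a,kj} = P_{a,ij}`
and `∑_a P_{a,ij} = δ_{ij}`; hence `∑_{a,i,j} ‖(P_{a,ij})* ψ‖² = ∑_{a,i,j} ‖Q_{a,ij} ψ‖² = n ‖ψ‖²`.
Synchronicity lets one add the vanishing terms with `a ≠ b` to the cross term, so that
`∑_{a,i,j} ⟪ψ, P_{a,ij} Q_{a,ij} ψ⟫ = ∑_{i,j} ⟪ψ, δ_{ij} δ_{ij} ψ⟫ = n ‖ψ‖²`.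
Expanding the square then gives `∑_{a,i,j} ‖v_{a,ij}‖² = 0`.
-/

open ContinuousLinearMap

theorem eq_of_sum_norm_sq_eq_re_sum_inner {𝕜 F ι : Type*} [RCLike 𝕜] [NormedAddCommGroup F]
    [InnerProductSpace 𝕜 F] [Fintype ι] {x y : ι → F} {r : ℝ}
    (hx : ∑ k, ‖x k‖ ^ 2 = r) (hy : ∑ k, ‖y k‖ ^ 2 = r)
    (hxy : RCLike.re (∑ k, inner 𝕜 (x k) (y k)) = r) : x = y := by
  have hsum : ∑ k, ‖x k - y k‖ ^ 2 = 0 := by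
    simp only [@norm_sub_sq 𝕜, Finset.sum_add_distrib, Finset.sum_sub_distrib, ← Finset.mul_sum,
      ← map_sum, hx, hy, hxy]
    ring
  funext k
  rw [Finset.sum_eq_zero_iff_of_nonneg fun _ _ => sq_nonneg _] at hsum
  simpa [sub_eq_zero] using hsum k (Finset.mem_univ k)

section

variable {E : Type*} [NormedAddCommGroup E] [InnerProductSpace ℂ E] {n c : ℕ}

theorem inclPi_apply (i : Fin n) (x : E) : inclPi E n i x = PiLp.single 2 i x := by
  ext j
  by_cases h : j = i <;> simp [inclPi, h]

@[simp]
theorem projPi_apply (i : Fin n) (ξ : PiLp 2 (fun _ : Fin n => E)) : projPi E n i ξ = ξ i := rfl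

theorem projPi_comp_inclPi (i j : Fin n) :
    projPi E n i ∘L inclPi E n j = if i = j then 1 else 0 := by
  ext x
  by_cases h : i = j
  · subst h; simp [inclPi_apply]
  · simp [inclPi_apply, h]

theorem sum_inclPi_comp_projPi : ∑ k, inclPi E n k ∘L projPi E n k = 1 := by
  ext ξ i
  simp [inclPi_apply, Pi.single_apply]

theorem adjoint_inclPi [CompleteSpace E] (i : Fin n) : adjoint (inclPi E n i) = projPi E n i := by
  refine ((eq_adjoint_iff _ _).2 fun ξ x => ?_).symm
  simp [inclPi_apply, PiLp.inner_apply, apply_ite]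

theorem adjoint_projPi [CompleteSpace E] (i : Fin n) : adjoint (projPi E n i) = inclPi E n i := by
  rw [← adjoint_inclPi, adjoint_adjoint]

theorem projPi_comp_comp_inclPi
    (A B : PiLp 2 (fun _ : Fin n => E) →L[ℂ] PiLp 2 (fun _ : Fin n => E)) (i j : Fin n) :
    projPi E n i ∘L (A ∘L B) ∘L inclPi E n j =
      ∑ k, (projPi E n i ∘L A ∘L inclPi E n k) ∘L (projPi E n k ∘L B ∘L inclPi E n j) := by
  conv_lhs => rw [← id_comp B, ← one_def, ← sum_inclPi_comp_projPi]
  simp only [finsetSum_comp, comp_finsetSum, comp_assoc]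

theorem projPi_comp_matToOp_comp_inclPi (T : Matrix (Fin n) (Fin n) (E →L[ℂ] E)) (i j : Fin n) :
    projPi E n i ∘L matToOp T ∘L inclPi E n j = T i j := by
  ext x
  simp [matToOp, inclPi_apply, apply_ite]

theorem adjoint_entry_of_isSelfAdjoint_matToOp [CompleteSpace E]
    {T : Matrix (Fin n) (Fin n) (E →L[ℂ] E)} (hT : IsSelfAdjoint (matToOp T)) (i j : Fin n) :
    adjoint (T i j) = T j i := by
  rw [← projPi_comp_matToOp_comp_inclPi T i j, ← projPi_comp_matToOp_comp_inclPi T j i]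
  simp only [adjoint_comp, adjoint_inclPi, adjoint_projPi, hT.adjoint_eq, comp_assoc]

theorem sum_entry_comp_entry_of_matToOp_idem {T : Matrix (Fin n) (Fin n) (E →L[ℂ] E)}
    (hT : matToOp T ∘L matToOp T = matToOp T) (i j : Fin n) :
    ∑ k, T i k ∘L T k j = T i j := by
  simp only [← projPi_comp_matToOp_comp_inclPi T, ← projPi_comp_comp_inclPi, hT]

theorem sum_entry_of_sum_matToOp_eq_one {P : Fin c → Matrix (Fin n) (Fin n) (E →L[ℂ] E)}
    (hP : ∑ a, matToOp (P a) = 1) (i j : Fin n) :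
    ∑ a, P a i j = if i = j then 1 else 0 := by
  simp only [← projPi_comp_matToOp_comp_inclPi (P _), ← finsetSum_comp, ← comp_finsetSum, hP,
    one_def, id_comp, projPi_comp_inclPi]

theorem sum_norm_sq_entry_apply [CompleteSpace E]
    {T : Fin c → Matrix (Fin n) (Fin n) (E →L[ℂ] E)}
    (hadj : ∀ a, IsSelfAdjoint (matToOp (T a)))
    (hidem : ∀ a, matToOp (T a) ∘L matToOp (T a) = matToOp (T a))
    (hsum : ∑ a, matToOp (T a) = 1) (x : E) :
    ∑ a, ∑ i, ∑ j, ‖T a i j x‖ ^ 2 = n * ‖x‖ ^ 2 := by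
  have hnorm : ∀ a i j, ‖T a i j x‖ ^ 2 = RCLike.re (inner ℂ x (T a j i (T a i j x))) := by
    intro a i j
    rw [← adjoint_entry_of_isSelfAdjoint_matToOp (hadj a) i j, adjoint_inner_right,
      inner_self_eq_norm_sq]
  calc ∑ a, ∑ i, ∑ j, ‖T a i j x‖ ^ 2
      = ∑ a, ∑ j, RCLike.re (inner ℂ x ((∑ i, T a j i ∘L T a i j) x)) := by
        simp only [hnorm, sum_apply, comp_apply, inner_sum, map_sum]
        exact Finset.sum_congr rfl fun a _ => Finset.sum_comm
    _ = ∑ j, RCLike.re (inner ℂ x ((∑ a, T a j j) x)) := by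
        simp only [sum_entry_comp_entry_of_matToOp_idem (hidem _), sum_apply, inner_sum, map_sum]
        exact Finset.sum_comm
    _ = n * ‖x‖ ^ 2 := by
        simp only [sum_entry_of_sum_matToOp_eq_one hsum, ↓reduceIte, one_apply_eq_self,
          inner_self_eq_norm_sq, Finset.sum_const, Finset.card_univ, Fintype.card_fin, nsmul_eq_mul]

theorem sum_inner_entry_apply_entry_apply_of_synchronous
    {P Q : Fin c → Matrix (Fin n) (Fin n) (E →L[ℂ] E)}
    (hPsum : ∑ a, matToOp (P a) = 1) (hQsum : ∑ b, matToOp (Q b) = 1) (x : E)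
    (hsync : ∀ a b, a ≠ b → ∑ i, ∑ j, inner ℂ x (P a i j (Q b i j x)) = 0) :
    ∑ a, ∑ i, ∑ j, inner ℂ x (P a i j (Q a i j x)) = n * inner ℂ x x := by
  calc ∑ a, ∑ i, ∑ j, inner ℂ x (P a i j (Q a i j x))
      = ∑ a, ∑ b, ∑ i, ∑ j, inner ℂ x (P a i j (Q b i j x)) :=
        Finset.sum_congr rfl fun a _ =>
          (Finset.sum_eq_single a (fun b _ hb => hsync a b hb.symm) (by simp)).symm
    _ = ∑ i, ∑ j, inner ℂ x ((∑ a, P a i j) ((∑ b, Q b i j) x)) := by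
        simp only [sum_apply, map_sum, inner_sum]
        simp only [Finset.sum_comm (γ := Fin c) (α := Fin n)]
        exact Finset.sum_congr rfl fun i _ => Finset.sum_congr rfl fun j _ => Finset.sum_comm
    _ = ∑ i : Fin n, ∑ j : Fin n, if i = j then inner ℂ x x else 0 := by
        refine Finset.sum_congr rfl fun i _ => Finset.sum_congr rfl fun j _ => ?_
        rw [sum_entry_of_sum_matToOp_eq_one hPsum, sum_entry_of_sum_matToOp_eq_one hQsum]
        split_ifs <;> simp
    _ = n * inner ℂ x x := by simp

end

theorem synchronous_vector_condition_general {H : Type*} [NormedAddCommGroup H]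
    [InnerProductSpace ℂ H] [CompleteSpace H] (n c : ℕ)
    (P Q : Fin c → Matrix (Fin n) (Fin n) (H →L[ℂ] H))
    (hPadj : ∀ a, IsSelfAdjoint (matToOp (P a)))
    (hPidem : ∀ a, (matToOp (P a)).comp (matToOp (P a)) = matToOp (P a))
    (hPsum : ∑ a, matToOp (P a) = 1)
    (hQadj : ∀ b, IsSelfAdjoint (matToOp (Q b)))
    (hQidem : ∀ b, (matToOp (Q b)).comp (matToOp (Q b)) = matToOp (Q b))
    (hQsum : ∑ b, matToOp (Q b) = 1)
    (ψ : H)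
    (hsync : ∀ a b : Fin c, a ≠ b →
      ∑ i, ∑ j, (inner ℂ ψ ((P a i j) ((Q b i j) ψ)) : ℂ) = 0) :
    ∀ a i j, (Q a i j) ψ = (ContinuousLinearMap.adjoint (P a i j)) ψ := by
  have hP := sum_norm_sq_entry_apply hPadj hPidem hPsum ψ
  have hQ := sum_norm_sq_entry_apply hQadj hQidem hQsum ψ
  have hPQ := sum_inner_entry_apply_entry_apply_of_synchronous hPsum hQsum ψ hsync
  have hvec : (fun k : Fin c × Fin n × Fin n => adjoint (P k.1 k.2.1 k.2.2) ψ) =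
      fun k => Q k.1 k.2.1 k.2.2 ψ := by
    refine eq_of_sum_norm_sq_eq_re_sum_inner (𝕜 := ℂ) (r := n * ‖ψ‖ ^ 2) ?_ ?_ ?_
    · simp only [Fintype.sum_prod_type, adjoint_entry_of_isSelfAdjoint_matToOp (hPadj _), ← hP]
      exact Finset.sum_congr rfl fun a _ => Finset.sum_comm
    · simpa only [Fintype.sum_prod_type] using hQ
    · simp only [Fintype.sum_prod_type, adjoint_inner_left, hPQ]
      rw [← RCLike.ofReal_natCast, RCLike.re_ofReal_mul, inner_self_eq_norm_sq]
  exact fun a i j => (congrFun hvec (a, i, j)).symm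

/-- **Theorem (synchronicity condition, part 1).**  Let `{P_a}` and `{Q_b}` be PVMs with `c`
outputs in `M_n(B(H))` with mutually commuting entries and let `ψ ∈ H` be a unit vector such
that the associated correlation is synchronous, i.e.
`∑_{i,j=1}^n ⟨P_{a,ij} Q_{b,ij} ψ, ψ⟩ = 0` for all `a ≠ b`.  Then
`Q_{a,ij} ψ = (P_{a,ij})* ψ` for all `1 ≤ a ≤ c` and `1 ≤ i,j ≤ n`. -/
theorem synchronous_vector_condition {H : Type*} [NormedAddCommGroup H]
    [InnerProductSpace ℂ H] [CompleteSpace H] (n c : ℕ)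
    (P Q : Fin c → Matrix (Fin n) (Fin n) (H →L[ℂ] H))
    (hPadj : ∀ a, IsSelfAdjoint (matToOp (P a)))
    (hPidem : ∀ a, (matToOp (P a)).comp (matToOp (P a)) = matToOp (P a))
    (hPsum : ∑ a, matToOp (P a) = 1)
    (hQadj : ∀ b, IsSelfAdjoint (matToOp (Q b)))
    (hQidem : ∀ b, (matToOp (Q b)).comp (matToOp (Q b)) = matToOp (Q b))
    (hQsum : ∑ b, matToOp (Q b) = 1)
    (hcomm : ∀ a b i j k l, (P a i j).comp (Q b k l) = (Q b k l).comp (P a i j))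
    (ψ : H) (hψ : ‖ψ‖ = 1)
    (hsync : ∀ a b : Fin c, a ≠ b →
      ∑ i, ∑ j, (inner ℂ ψ ((P a i j) ((Q b i j) ψ)) : ℂ) = 0) :
    ∀ a i j, (Q a i j) ψ = (ContinuousLinearMap.adjoint (P a i j)) ψ :=
  synchronous_vector_condition_general n c P Q hPadj hPidem hPsum hQadj hQidem hQsum ψ hsync
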